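/- Let G be a graph of minimum degree δ ≥ 1 with w_0 ≤ l−1 and w_{l−1} ≥ 1, where w_0 ≥ ... ≥ w_{l−1}. Then γ_{(w_0,...,w_{l−2},1)}(G) ≤ γ_{(w_0,...,w_{l−1},0)}(G). -/

import Mathlib

open scoped Classical
open Finset SimpleGraph

/-- A `w`-dominating function: `f : V → {0,…,l}` with `f(N(v)) ≥ w_{f(v)}` for all `v`. -/
def WDom {V : Type*} [Fintype V] (G : SimpleGraph V) {l : ℕ} (w : Fin (l+1) → ℕ)
    (f : V → Fin (l+1)) : Prop :=
  ∀ v, w (f v) ≤ ∑ u, if G.Adj v u then (f u : ℕ) else 0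

/-- The `w`-domination number. -/
noncomputable def gammaW {V : Type*} [Fintype V] (G : SimpleGraph V) {l : ℕ}
    (w : Fin (l+1) → ℕ) : ℕ :=
  sInf {n | ∃ f : V → Fin (l+1), WDom G w f ∧ ∑ v, (f v : ℕ) = n}

/-- The Italian domination number `γ_I = γ_{(2,0,0)}`. -/
noncomputable def gammaI {V : Type*} [Fintype V] (G : SimpleGraph V) : ℕ :=
  gammaW G ![2,0,0]

/-- The domination number. -/
noncomputable def gamma {V : Type*} [Fintype V] (G : SimpleGraph V) : ℕ :=
  sInf {n | ∃ S : Finset V, (∀ v, v ∈ S ∨ ∃ u ∈ S, G.Adj u v) ∧ S.card = n}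

/-- The total domination number. -/
noncomputable def gammaT {V : Type*} [Fintype V] (G : SimpleGraph V) : ℕ :=
  sInf {n | ∃ S : Finset V, (∀ v, ∃ u ∈ S, G.Adj u v) ∧ S.card = n}

/-- The 2-domination number. -/
noncomputable def gamma2 {V : Type*} [Fintype V] (G : SimpleGraph V) : ℕ :=
  sInf {n | ∃ S : Finset V, (∀ v ∉ S, 2 ≤ (S.filter (fun u => G.Adj u v)).card) ∧ S.card = n}

/-- The double domination number. -/
noncomputable def gammaX2 {V : Type*} [Fintype V] (G : SimpleGraph V) : ℕ :=
  sInf {n | ∃ S : Finset V, (∀ v, 2 ≤ (S.filter (fun u => u = v ∨ G.Adj u v)).card) ∧ S.card = n}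

/-- The double total domination number. -/
noncomputable def gammaX2T {V : Type*} [Fintype V] (G : SimpleGraph V) : ℕ :=
  sInf {n | ∃ S : Finset V, (∀ v, 2 ≤ (S.filter (fun u => G.Adj u v)).card) ∧ S.card = n}

/-- The lexicographic product `G ∘ H`. -/
def lexProd {V W : Type*} (G : SimpleGraph V) (H : SimpleGraph W) : SimpleGraph (V × W) where
  Adj x y := G.Adj x.1 y.1 ∨ (x.1 = y.1 ∧ H.Adj x.2 y.2)
  symm := by
    constructor
    rintro x y (h | ⟨h1, h2⟩)
    · exact Or.inl h.symm
    · exact Or.inr ⟨h1.symm, h2.symm⟩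
  loopless := by
    constructor
    rintro x (h | ⟨_, h⟩)
    · exact G.irrefl h
    · exact H.irrefl h

/-!
Start from a minimum `w`-dominating function `f` and let every vertex `x` carrying the top label
`m+2` choose a neighbour `c x`. Lower every top label to `m+1` and raise every `c x` to label at
least `1`. A former top vertex still sees the positive label of its `c x`; a vertex next to a former
top vertex sees a label `m+1`, which beats every weight of the new vector; every other vertex keeps
its label and sees at least what it saw before. At most as many vertices are raised as are lowered,
so the weight does not grow.
-/

section NeighbourSum

variable {V : Type*} [Fintype V] (G : SimpleGraph V)

lemma le_sum_adj_of_adj {v u : V} (h : G.Adj v u) (F : V → ℕ) :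
    F u ≤ ∑ x, if G.Adj v x then F x else 0 := by
  simpa [h] using Finset.single_le_sum (f := fun x => if G.Adj v x then F x else 0)
    (fun _ _ => Nat.zero_le _) (Finset.mem_univ u)

lemma sum_adj_mono {v : V} {F F' : V → ℕ} (h : ∀ u, G.Adj v u → F u ≤ F' u) :
    (∑ u, if G.Adj v u then F u else 0) ≤ ∑ u, if G.Adj v u then F' u else 0 :=
  Finset.sum_le_sum fun u _ => by split_ifs with hu; exacts [h u hu, le_rfl]

end NeighbourSum

section Domination

variable {V : Type*} [Fintype V] {G : SimpleGraph V} {l : ℕ} {w : Fin (l+1) → ℕ}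

lemma gammaW_le_sum {f : V → Fin (l+1)} (hf : WDom G w f) : gammaW G w ≤ ∑ v, (f v : ℕ) :=
  Nat.sInf_le ⟨f, hf, rfl⟩

lemma exists_wDom_sum_eq_gammaW (hlast : w (Fin.last l) = 0) :
    ∃ f, WDom G w f ∧ ∑ v, (f v : ℕ) = gammaW G w := by
  have hne : {n | ∃ f : V → Fin (l+1), WDom G w f ∧ ∑ v, (f v : ℕ) = n}.Nonempty :=
    ⟨_, fun _ => Fin.last l, fun v => by simp [hlast], rfl⟩
  exact Nat.sInf_mem hne

end Domination

section LastOne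

variable {m : ℕ} {w : Fin (m+3) → ℕ}

/-- The vector `(w_0, …, w_m, 1)` built from `w = (w_0, …, w_{m+2})`. -/
def lastOne (w : Fin (m+3) → ℕ) : Fin (m+2) → ℕ :=
  fun i => if (i : ℕ) = m+1 then 1 else w i.castSucc

lemma lastOne_le (hle : ∀ j, w j ≤ m+1) (i : Fin (m+2)) : lastOne w i ≤ m+1 := by
  unfold lastOne
  split_ifs
  exacts [by omega, hle _]

lemma lastOne_le_of_val_eq (hpen : 1 ≤ w ⟨m+1, by omega⟩) {i : Fin (m+2)} {j : Fin (m+3)}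
    (h : (i : ℕ) = j) : lastOne w i ≤ w j := by
  unfold lastOne
  split_ifs with hi
  · have hj : j = (⟨m+1, by omega⟩ : Fin (m+3)) := Fin.ext (h.symm.trans hi)
    rwa [hj]
  · rw [show i.castSucc = j from Fin.ext h]

end LastOne

section LowerTop

variable {V : Type*} [Fintype V] {m : ℕ} (f : V → Fin (m+3)) (c : V → V)

noncomputable def topSet : Finset V := univ.filter fun x => f x = Fin.last (m+2)

/-- Top labels become `m+1`, and the vertices `c x` for top vertices `x` get label at least `1`. -/
noncomputable def lowerTop (v : V) : Fin (m+2) :=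
  ⟨max (min (f v : ℕ) (m+1)) (if v ∈ (topSet f).image c then 1 else 0),
    by split_ifs <;> omega⟩

variable {f c}

lemma val_lowerTop (v : V) : (lowerTop f c v : ℕ) =
    max (min (f v : ℕ) (m+1)) (if v ∈ (topSet f).image c then 1 else 0) :=
  rfl

lemma val_lowerTop_of_top {v : V} (hv : f v = Fin.last (m+2)) : (lowerTop f c v : ℕ) = m+1 := by
  rw [val_lowerTop, hv, Fin.val_last]
  split_ifs <;> omega

lemma one_le_val_lowerTop_apply {x : V} (hx : f x = Fin.last (m+2)) :
    1 ≤ (lowerTop f c (c x) : ℕ) := by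
  have : c x ∈ (topSet f).image c := mem_image_of_mem c (by simpa [topSet] using hx)
  rw [val_lowerTop, if_pos this]
  omega

lemma le_val_lowerTop {v : V} (hv : f v ≠ Fin.last (m+2)) : (f v : ℕ) ≤ lowerTop f c v := by
  have := Fin.val_lt_last hv
  rw [val_lowerTop]
  omega

lemma val_lowerTop_of_notMem {v : V} (hv : f v ≠ Fin.last (m+2)) (hR : v ∉ (topSet f).image c) :
    (lowerTop f c v : ℕ) = f v := by
  have := Fin.val_lt_last hv
  rw [val_lowerTop, if_neg hR]
  omega

variable (f c)

lemma sum_lowerTop_le : ∑ v, (lowerTop f c v : ℕ) ≤ ∑ v, (f v : ℕ) := by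
  have hsplit : ∀ v, (f v : ℕ) = min (f v : ℕ) (m+1) + if v ∈ topSet f then 1 else 0 := by
    intro v
    by_cases hv : f v = Fin.last (m+2)
    · simp [topSet, hv]
    · have := Fin.val_lt_last hv
      simp only [topSet, mem_filter, mem_univ, true_and, if_neg hv]
      omega
  calc ∑ v, (lowerTop f c v : ℕ)
      ≤ ∑ v, (min (f v : ℕ) (m+1) + if v ∈ (topSet f).image c then 1 else 0) :=
        sum_le_sum fun v _ => by rw [val_lowerTop]; split_ifs <;> omega
    _ = ∑ v, min (f v : ℕ) (m+1) + #((topSet f).image c) := by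
        rw [sum_add_distrib, Fintype.sum_ite_mem, card_eq_sum_ones]
    _ ≤ ∑ v, min (f v : ℕ) (m+1) + #(topSet f) := Nat.add_le_add_left card_image_le _
    _ = ∑ v, (f v : ℕ) := by
        rw [sum_congr rfl fun v _ => hsplit v, sum_add_distrib, Fintype.sum_ite_mem,
          card_eq_sum_ones]

lemma wDom_lowerTop {G : SimpleGraph V} (hc : ∀ x, G.Adj x (c x)) {w : Fin (m+3) → ℕ}
    (hf : WDom G w f) (hle : ∀ j, w j ≤ m+1) (hpen : 1 ≤ w ⟨m+1, by omega⟩) :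
    WDom G (lastOne w) (lowerTop f c) := by
  intro v
  by_cases hnb : ∃ u, G.Adj v u ∧ f u = Fin.last (m+2)
  · obtain ⟨u, hvu, hu⟩ := hnb
    calc lastOne w (lowerTop f c v) ≤ m+1 := lastOne_le hle _
      _ = lowerTop f c u := (val_lowerTop_of_top hu).symm
      _ ≤ _ := le_sum_adj_of_adj G hvu fun u => (lowerTop f c u : ℕ)
  push Not at hnb
  by_cases hv : f v = Fin.last (m+2)
  · calc lastOne w (lowerTop f c v) = 1 := by simp [lastOne, val_lowerTop_of_top hv]
      _ ≤ lowerTop f c (c v) := one_le_val_lowerTop_apply hv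
      _ ≤ _ := le_sum_adj_of_adj G (hc v) fun u => (lowerTop f c u : ℕ)
  have hR : v ∉ (topSet f).image c := by
    simp only [topSet, mem_image, mem_filter, mem_univ, true_and, not_exists, not_and]
    rintro x hx rfl
    exact hnb x (hc x).symm hx
  calc lastOne w (lowerTop f c v)
      ≤ w (f v) := lastOne_le_of_val_eq hpen (val_lowerTop_of_notMem hv hR)
    _ ≤ ∑ u, if G.Adj v u then (f u : ℕ) else 0 := hf v
    _ ≤ _ := sum_adj_mono G fun u hu => le_val_lowerTop (hnb u hu)

end LowerTop

theorem gammaW_last_one_le_last_zero {V : Type*} [Fintype V] (G : SimpleGraph V)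
    (hG : ∀ v, ∃ u, G.Adj v u) {m : ℕ} (w : Fin (m+3) → ℕ)
    (hw : Antitone w) (hlast : w (Fin.last (m+2)) = 0)
    (hpen : 1 ≤ w ⟨m+1, by omega⟩) (hw0 : w 0 ≤ m+1) :
    gammaW G (fun i : Fin (m+2) => if (i : ℕ) = m+1 then 1 else w (Fin.castSucc i)) ≤
      gammaW G w := by
  obtain ⟨f, hf, hsum⟩ := exists_wDom_sum_eq_gammaW (G := G) hlast
  choose c hc using hG
  have hle : ∀ j, w j ≤ m+1 := fun j => (hw (Fin.zero_le j)).trans hw0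
  calc gammaW G (lastOne w) ≤ ∑ v, (lowerTop f c v : ℕ) :=
        gammaW_le_sum (wDom_lowerTop f c hc hf hle hpen)
    _ ≤ ∑ v, (f v : ℕ) := sum_lowerTop_le f c
    _ = gammaW G w := hsum
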